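/- Semantic soundness of the strengthened induction rule: for all χ, φ ∈ L_NF and γ ∈ G_NF, if the formula χ ∧ ⟨γ*⟩φ is satisfiable in some game model, then at least one of the formulas χ ∧ φ and χ ∧ ⟨γ⟩⟨(χ̄? ; γ)*⟩⟨χ̄?⟩φ is satisfiable in some game model. -/

import Mathlib

/-! Normal-form game logic: syntax -/

mutual
inductive GLForm : Type where
  | atom  : ℕ → GLForm
  | natom : ℕ → GLForm
  | or    : GLForm → GLForm → GLForm
  | and   : GLForm → GLForm → GLForm
  | dia   : GLGame → GLForm → GLForm
inductive GLGame : Type where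
  | atg   : ℕ → GLGame
  | atgd  : ℕ → GLGame
  | comp  : GLGame → GLGame → GLGame
  | cha   : GLGame → GLGame → GLGame
  | chd   : GLGame → GLGame → GLGame
  | star  : GLGame → GLGame
  | cross : GLGame → GLGame
  | test  : GLForm → GLGame
  | dtest : GLForm → GLGame
end

noncomputable instance : DecidableEq GLForm := Classical.decEq _
noncomputable instance : DecidableEq GLGame := Classical.decEq _

/-! Game models (monotone neighbourhood models via effectivity functions),
    and Knaster-Tarski least/greatest fixed points of set operators. -/

structure GameModel where
  S : Type
  E : ℕ → Set S → Set S
  mono : ∀ g, Monotone (E g)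
  V : ℕ → Set S

def lfpSet {σ : Type} (f : Set σ → Set σ) : Set σ := sInf {X | f X ⊆ X}
def gfpSet {σ : Type} (f : Set σ → Set σ) : Set σ := sSup {X | X ⊆ f X}

/-! Semantics of normal-form game logic over game models. -/

mutual
def GLForm.mng (M : GameModel) : GLForm → Set M.S
  | .atom p  => M.V p
  | .natom p => (M.V p)ᶜ
  | .or φ ψ  => GLForm.mng M φ ∪ GLForm.mng M ψ
  | .and φ ψ => GLForm.mng M φ ∩ GLForm.mng M ψ
  | .dia γ φ => GLGame.eff M γ (GLForm.mng M φ)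
def GLGame.eff (M : GameModel) : GLGame → Set M.S → Set M.S
  | .atg g,  X => M.E g X
  | .atgd g, X => (M.E g Xᶜ)ᶜ
  | .comp γ δ, X => GLGame.eff M γ (GLGame.eff M δ X)
  | .cha γ δ, X => GLGame.eff M γ X ∪ GLGame.eff M δ X
  | .chd γ δ, X => GLGame.eff M γ X ∩ GLGame.eff M δ X
  | .star γ, X => lfpSet (fun Y => X ∪ GLGame.eff M γ Y)
  | .cross γ, X => gfpSet (fun Y => X ∩ GLGame.eff M γ Y)
  | .test φ, X => GLForm.mng M φ ∩ X
  | .dtest φ, X => GLForm.mng M φ ∪ X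
end

/-- Validity over game models. -/
def GLValid (φ : GLForm) : Prop := ∀ M : GameModel, GLForm.mng M φ = Set.univ

/-! Complementation (negation normal form negation) and dual games. -/

mutual
def GLForm.compl : GLForm → GLForm
  | .atom p  => .natom p
  | .natom p => .atom p
  | .or φ ψ  => .and (GLForm.compl φ) (GLForm.compl ψ)
  | .and φ ψ => .or (GLForm.compl φ) (GLForm.compl ψ)
  | .dia γ φ => .dia (GLGame.dual γ) (GLForm.compl φ)
def GLGame.dual : GLGame → GLGame
  | .atg g  => .atgd g
  | .atgd g => .atg g
  | .comp γ δ => .comp (GLGame.dual γ) (GLGame.dual δ)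
  | .cha γ δ  => .chd (GLGame.dual γ) (GLGame.dual δ)
  | .chd γ δ  => .cha (GLGame.dual γ) (GLGame.dual δ)
  | .star γ  => .cross (GLGame.dual γ)
  | .cross γ => .star (GLGame.dual γ)
  | .test φ  => .dtest (GLForm.compl φ)
  | .dtest φ => .test (GLForm.compl φ)
end

/-- Satisfiability over game models. -/
def GLSat (φ : GLForm) : Prop := ∃ M : GameModel, (GLForm.mng M φ).Nonempty

/-!
Let `A = ⟦χ⟧`, `F = ⟦φ⟧` and let `T = ⟦⟨(χ̄? ; γ)*⟩⟨χ̄?⟩φ⟧`, the least fixed point of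
`Y ↦ Aᶜ ∩ (F ∪ Ê_γ Y)`. If in some model both `A ∩ F` and `A ∩ Ê_γ T` are empty, then
`Aᶜ ∩ (F ∪ Ê_γ T)` is a prefixed point of `Y ↦ F ∪ Ê_γ Y`: it contains `F`, and as it lies
below `T`, its image under `Ê_γ` lies in `Ê_γ T ⊆ Aᶜ ∩ (F ∪ Ê_γ T)`. So `⟦⟨γ*⟩φ⟧` misses `A`.
-/

section FixedPoints

variable {σ : Type}

theorem lfpSet_subset {f : Set σ → Set σ} {X : Set σ} (h : f X ⊆ X) : lfpSet f ⊆ X :=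
  sInf_le h

theorem lfpSet_prefixed {f : Set σ → Set σ} (hf : Monotone f) : f (lfpSet f) ⊆ lfpSet f :=
  le_sInf fun _ hX => (hf (lfpSet_subset hX)).trans hX

theorem lfpSet_mono {f g : Set σ → Set σ} (h : ∀ X, f X ⊆ g X) : lfpSet f ⊆ lfpSet g :=
  sInf_le_sInf fun _ hX => (h _).trans hX

theorem gfpSet_mono {f g : Set σ → Set σ} (h : ∀ X, f X ⊆ g X) : gfpSet f ⊆ gfpSet g :=
  sSup_le_sSup fun _ hX => hX.trans (h _)

theorem gfpSet_eq_compl_lfpSet (f : Set σ → Set σ) :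
    gfpSet f = (lfpSet fun Y => (f Yᶜ)ᶜ)ᶜ := by
  ext x
  simp only [gfpSet, lfpSet, Set.sSup_eq_sUnion, Set.sInf_eq_sInter, Set.mem_compl_iff,
    Set.mem_sUnion, Set.mem_sInter, Set.mem_ofPred_eq, not_forall, exists_prop]
  constructor
  · rintro ⟨X, hX, hx⟩
    exact ⟨Xᶜ, by rwa [compl_compl, Set.compl_subset_compl], not_not.2 hx⟩
  · rintro ⟨X, hX, hx⟩
    exact ⟨Xᶜ, by rwa [← Set.compl_subset_compl, compl_compl], hx⟩

theorem disjoint_lfpSet_of_disjoint_step {e : Set σ → Set σ} (he : Monotone e) {A F : Set σ}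
    (hF : Disjoint A F) (hT : Disjoint A (e (lfpSet fun Y => Aᶜ ∩ F ∪ Aᶜ ∩ e Y))) :
    Disjoint A (lfpSet fun Y => F ∪ e Y) := by
  set T := lfpSet fun Y => Aᶜ ∩ F ∪ Aᶜ ∩ e Y
  have hT_prefixed : Aᶜ ∩ (F ∪ e T) ⊆ T := by
    rw [Set.inter_union_distrib_left]
    exact lfpSet_prefixed fun _ _ h =>
      Set.union_subset_union_right _ (Set.inter_subset_inter_right _ (he h))
  have hstep : e (Aᶜ ∩ (F ∪ e T)) ⊆ e T := he hT_prefixed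
  have hstar : lfpSet (fun Y => F ∪ e Y) ⊆ Aᶜ ∩ (F ∪ e T) :=
    lfpSet_subset <| Set.union_subset
      (Set.subset_inter hF.subset_compl_left Set.subset_union_left)
      (Set.subset_inter (hstep.trans hT.subset_compl_left) (hstep.trans Set.subset_union_right))
  exact disjoint_compl_right.mono_right (hstar.trans Set.inter_subset_left)

end FixedPoints

theorem GLGame.eff_mono (M : GameModel) : ∀ γ : GLGame, Monotone (GLGame.eff M γ)
  | .atg g, _, _, h => M.mono g h
  | .atgd g, _, _, h => Set.compl_subset_compl.2 (M.mono g (Set.compl_subset_compl.2 h))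
  | .comp γ δ, _, _, h => eff_mono M γ (eff_mono M δ h)
  | .cha γ δ, _, _, h => Set.union_subset_union (eff_mono M γ h) (eff_mono M δ h)
  | .chd γ δ, _, _, h => Set.inter_subset_inter (eff_mono M γ h) (eff_mono M δ h)
  | .star _, _, _, h => lfpSet_mono fun _ => Set.union_subset_union_left _ h
  | .cross _, _, _, h => gfpSet_mono fun _ => Set.inter_subset_inter_left _ h
  | .test _, _, _, h => Set.inter_subset_inter_right _ h
  | .dtest _, _, _, h => Set.union_subset_union_right _ h

mutual
theorem GLForm.mng_compl (M : GameModel) :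
    ∀ χ : GLForm, GLForm.mng M χ.compl = (GLForm.mng M χ)ᶜ
  | .atom _ => rfl
  | .natom _ => (compl_compl _).symm
  | .or φ ψ => by
      simp only [GLForm.compl, GLForm.mng, GLForm.mng_compl M φ, GLForm.mng_compl M ψ,
          Set.compl_union]
  | .and φ ψ => by
      simp only [GLForm.compl, GLForm.mng, GLForm.mng_compl M φ, GLForm.mng_compl M ψ,
          Set.compl_inter]
  | .dia γ φ => by
      simp only [GLForm.compl, GLForm.mng, GLForm.mng_compl M φ, GLGame.eff_dual M γ, compl_compl]
theorem GLGame.eff_dual (M : GameModel) :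
    ∀ (γ : GLGame) (X : Set M.S), GLGame.eff M γ.dual X = (GLGame.eff M γ Xᶜ)ᶜ
  | .atg _, _ => rfl
  | .atgd _, _ => by simp only [GLGame.dual, GLGame.eff, compl_compl]
  | .comp γ δ, X => by
      simp only [GLGame.dual, GLGame.eff, GLGame.eff_dual M δ X, GLGame.eff_dual M γ, compl_compl]
  | .cha γ δ, X => by
      simp only [GLGame.dual, GLGame.eff, GLGame.eff_dual M γ X, GLGame.eff_dual M δ X,
          Set.compl_union]
  | .chd γ δ, X => by
      simp only [GLGame.dual, GLGame.eff, GLGame.eff_dual M γ X, GLGame.eff_dual M δ X,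
          Set.compl_inter]
  | .star γ, X => by
      simp only [GLGame.dual, GLGame.eff, gfpSet_eq_compl_lfpSet, GLGame.eff_dual M γ,
          Set.compl_inter, compl_compl]
  | .cross γ, X => by
      simp only [GLGame.dual, GLGame.eff, gfpSet_eq_compl_lfpSet, GLGame.eff_dual M γ,
          Set.compl_inter, compl_compl]
  | .test φ, X => by
      simp only [GLGame.dual, GLGame.eff, GLForm.mng_compl M φ, Set.compl_inter, compl_compl]
  | .dtest φ, X => by
      simp only [GLGame.dual, GLGame.eff, GLForm.mng_compl M φ, Set.compl_union, compl_compl]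
end

theorem disjoint_mng_star_of_disjoint (M : GameModel) (χ φ : GLForm) (γ : GLGame)
    (hφ : Disjoint (χ.mng M) (φ.mng M))
    (hγ : Disjoint (χ.mng M)
      ((GLForm.dia γ (.dia (.star (.comp (.test χ.compl) γ)) (.dia (.test χ.compl) φ))).mng M)) :
    Disjoint (χ.mng M) ((GLForm.dia (.star γ) φ).mng M) := by
  simp only [GLForm.mng, GLGame.eff, GLForm.mng_compl] at hγ ⊢
  exact disjoint_lfpSet_of_disjoint_step (GLGame.eff_mono M γ) hφ hγ

/-- Semantic soundness of the strengthened induction rule: if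
    `χ ∧ ⟨γ*⟩φ` is satisfiable, then so is `χ ∧ φ` or
    `χ ∧ ⟨γ⟩⟨(χ̄? ; γ)*⟩⟨χ̄?⟩φ`. -/
theorem strengthened_induction_semantically_sound (χ φ : GLForm) (γ : GLGame) :
    GLSat (.and χ (.dia (.star γ) φ)) →
    GLSat (.and χ φ) ∨
      GLSat (.and χ (.dia γ (.dia (.star (.comp (.test (GLForm.compl χ)) γ))
        (.dia (.test (GLForm.compl χ)) φ)))) := by
  rintro ⟨M, x, hxχ, hxstar⟩
  by_contra! hunsat
  simp only [GLSat, GLForm.mng, not_exists, Set.not_nonempty_iff_eq_empty,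
    ← Set.disjoint_iff_inter_eq_empty] at hunsat
  exact (disjoint_mng_star_of_disjoint M χ φ γ (hunsat.1 M) (hunsat.2 M)).ne_of_mem
    hxχ hxstar rfl
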